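/- Suppose a nonnegative sequence (eₜ) satisfies e_{t+1} ≤ β^{2t}(C₁ eₜ + C₂ e_{t-1} + C₃) with 0 < β < 1 and constants C₁, C₂, C₃ ≥ 0 and initial values e₀ = e₋₁ = 0. If β² (C₁ + C₂) ≤ q < 1 for some q, then the sequence is uniformly bounded: sup_t eₜ ≤ C₃/(1 - q). -/

import Mathlib

/-!
The bound `M = C₃ / (1 - q)` is the fixed point of `x ↦ q x + C₃`, and the pair `(e t, e (t + 1))`
stays in `[0, M]²` by induction: from the second step on, `β^{2t} ≤ β²` turns the recursion into
`e (t + 1) ≤ q M + C₃ = M`, while at the first step the vanishing initial values leave only `C₃ ≤ M`.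
-/

lemma mul_div_one_sub_add_self {q : ℝ} (hq : q < 1) (C : ℝ) :
    q * (C / (1 - q)) + C = C / (1 - q) := by
  field_simp [(sub_pos.2 hq).ne']
  ring

lemma pow_mul_mul_add_le {β C₁ C₂ x y M : ℝ} {k : ℕ} (hβ0 : 0 ≤ β) (hβ1 : β ≤ 1)
    (hC₁ : 0 ≤ C₁) (hC₂ : 0 ≤ C₂) (hx0 : 0 ≤ x) (hy0 : 0 ≤ y) (hx : x ≤ M) (hy : y ≤ M)
    (hk : 0 < k ∨ x = 0 ∧ y = 0) :
    β ^ (2 * k) * (C₁ * x + C₂ * y) ≤ β ^ 2 * (C₁ + C₂) * M := by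
  have hM : 0 ≤ M := hx0.trans hx
  rcases hk with hk | ⟨rfl, rfl⟩
  · calc β ^ (2 * k) * (C₁ * x + C₂ * y)
          ≤ β ^ 2 * ((C₁ + C₂) * M) := by
            refine mul_le_mul (pow_le_pow_of_le_one hβ0 hβ1 (by omega)) ?_ (by positivity)
              (by positivity)
            linarith [mul_le_mul_of_nonneg_left hx hC₁, mul_le_mul_of_nonneg_left hy hC₂]
        _ = β ^ 2 * (C₁ + C₂) * M := by ring
  · simp only [mul_zero, add_zero]
    positivity

/-- Uniform boundedness of the consensus-error recursion
`e_{t+1} ≤ β^{2t}(C₁eₜ + C₂e_{t-1} + C₃)` with `e₀ = e₋₁ = 0`: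
if `β²(C₁+C₂) ≤ q < 1` then `sup_t eₜ ≤ C₃/(1-q)`. -/
theorem stmt7 (e : ℤ → ℝ) (β C₁ C₂ C₃ q : ℝ)
    (hβ0 : 0 < β) (hβ1 : β < 1)
    (hC₁ : 0 ≤ C₁) (hC₂ : 0 ≤ C₂) (hC₃ : 0 ≤ C₃)
    (hnonneg : ∀ t, 0 ≤ e t)
    (h0 : e 0 = 0) (hm1 : e (-1) = 0)
    (hrec : ∀ t : ℤ, 0 ≤ t →
      e (t + 1) ≤ β ^ (2 * t.toNat) * (C₁ * e t + C₂ * e (t - 1) + C₃))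
    (hq : β ^ 2 * (C₁ + C₂) ≤ q) (hq1 : q < 1) :
    ∀ t : ℤ, -1 ≤ t → e t ≤ C₃ / (1 - q) := by
  set M := C₃ / (1 - q)
  have hM : 0 ≤ M := div_nonneg hC₃ (sub_pos.2 hq1).le
  have hpair : ∀ t, -1 ≤ t → e t ≤ M ∧ e (t + 1) ≤ M := by
    refine Int.leInduction ⟨by simp [hm1, hM], by simp [h0, hM]⟩ ?_
    rintro t ht ⟨hx, hy⟩
    refine ⟨hy, ?_⟩
    have hstart : 0 < (t + 1).toNat ∨ e (t + 1) = 0 ∧ e t = 0 := by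
      rcases ht.eq_or_lt with rfl | ht
      · exact Or.inr ⟨by simpa using h0, hm1⟩
      · exact Or.inl (by omega)
    have hmix := pow_mul_mul_add_le hβ0.le hβ1.le hC₁ hC₂ (hnonneg _) (hnonneg _) hy hx hstart
    have hC₃' : β ^ (2 * (t + 1).toNat) * C₃ ≤ C₃ :=
      mul_le_of_le_one_left hC₃ (pow_le_one₀ hβ0.le hβ1.le)
    calc e (t + 1 + 1)
        ≤ β ^ (2 * (t + 1).toNat) * (C₁ * e (t + 1) + C₂ * e t + C₃) := by
          simpa using hrec (t + 1) (by omega)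
      _ = β ^ (2 * (t + 1).toNat) * (C₁ * e (t + 1) + C₂ * e t)
            + β ^ (2 * (t + 1).toNat) * C₃ := mul_add _ _ _
      _ ≤ q * M + C₃ := add_le_add (hmix.trans (mul_le_mul_of_nonneg_right hq hM)) hC₃'
      _ = M := mul_div_one_sub_add_self hq1 C₃
  exact fun t ht => (hpair t ht).1
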